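/- Let G be a finite graph and L a list-assignment for G such that |L(v)| ≥ 2Δ(G) + 1 for every vertex v, where Δ(G) is the maximum degree of G. For any two L-colorings α and β of G, there exists an L-recoloring sequence transforming α into β that recolors each vertex at most 2 times (in particular, the sequence has length at most 2n, where n is the number of vertices of G). -/

import Mathlib

variable {V : Type} [Fintype V] [DecidableEq V]

set_option linter.unusedSectionVars false

/-- Apply a list of recoloring steps (vertex, new color) to a coloring, one by one. -/
def applySteps (α : V → ℕ) : List (V × ℕ) → (V → ℕ)
  | [] => α
  | q :: σ => applySteps (Function.update α q.1 q.2) σ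

/-- `f` is a proper `L`-coloring of the subgraph of `G` induced on the vertex set `s`. -/
def ProperOn (G : SimpleGraph V) (L : V → Finset ℕ) (s : Set V) (f : V → ℕ) : Prop :=
  (∀ v ∈ s, f v ∈ L v) ∧ ∀ u ∈ s, ∀ v ∈ s, G.Adj u v → f u ≠ f v

/-- `σ` is an `L`-recoloring sequence for the subgraph of `G` induced on `s`,
starting from the coloring `α`: every step recolors a vertex of `s`, and every
intermediate coloring (including the initial and final ones) is a proper
`L`-coloring of the induced subgraph. -/
def RecolSeqOn (G : SimpleGraph V) (L : V → Finset ℕ) (s : Set V) (α : V → ℕ)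
    (σ : List (V × ℕ)) : Prop :=
  (∀ q ∈ σ, q.1 ∈ s) ∧ ∀ n ≤ σ.length, ProperOn G L s (applySteps α (σ.take n))

/-- The number of times the recoloring sequence `σ` recolors the vertex `v`. -/
def recolors (σ : List (V × ℕ)) (v : V) : ℕ :=
  σ.countP (fun q => decide (q.1 = v))

lemma applySteps_append (α : V → ℕ) (σ τ : List (V × ℕ)) :
    applySteps α (σ ++ τ) = applySteps (applySteps α σ) τ := by
  induction σ generalizing α with
  | nil => rfl
  | cons q σ ih => simp [applySteps, ih]

lemma recolSeqOn_cons {G : SimpleGraph V} {L : V → Finset ℕ} {s : Set V} {α : V → ℕ}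
    {q : V × ℕ} {σ : List (V × ℕ)} :
    RecolSeqOn G L s α (q :: σ) ↔
      q.1 ∈ s ∧ ProperOn G L s α ∧ RecolSeqOn G L s (Function.update α q.1 q.2) σ := by
  constructor
  · rintro ⟨h1, h2⟩
    refine ⟨h1 q (List.mem_cons_self), ?_, ?_, ?_⟩
    · have := h2 0 (by simp)
      simpa [applySteps] using this
    · exact fun p hp => h1 p (List.mem_cons_of_mem _ hp)
    · intro n hn
      have := h2 (n+1) (by simpa using Nat.succ_le_succ hn)
      simpa [applySteps] using this
  · rintro ⟨hq, hα, h1, h2⟩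
    refine ⟨?_, ?_⟩
    · rintro p hp
      rcases List.mem_cons.1 hp with rfl | hp
      · exact hq
      · exact h1 p hp
    · intro n hn
      cases n with
      | zero => simpa [applySteps] using hα
      | succ m =>
        have := h2 m (by simpa using hn)
        simpa [applySteps] using this

lemma recolSeqOn_append {G : SimpleGraph V} {L : V → Finset ℕ} {s : Set V} {α : V → ℕ}
    {σ τ : List (V × ℕ)} (h1 : RecolSeqOn G L s α σ)
    (h2 : RecolSeqOn G L s (applySteps α σ) τ) : RecolSeqOn G L s α (σ ++ τ) := by
  refine ⟨?_, ?_⟩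
  · intro q hq
    rcases List.mem_append.1 hq with h | h
    exacts [h1.1 q h, h2.1 q h]
  · intro n hn
    rcases le_or_gt n σ.length with h | h
    · rw [List.take_append, Nat.sub_eq_zero_of_le h, List.take_zero,
        List.append_nil]
      exact h1.2 n h
    · rw [List.take_append, List.take_of_length_le h.le, applySteps_append]
      refine h2.2 (n - σ.length) ?_
      have := hn
      simp only [List.length_append] at this
      omega

lemma pass2 (G : SimpleGraph V) [DecidableRel G.Adj] (L : V → Finset ℕ) (β : V → ℕ)
    (hβ : ProperOn G L Set.univ β) :
    ∀ (l : List V) (γ : V → ℕ), ProperOn G L Set.univ γ →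
      (∀ u v, G.Adj u v → γ u ≠ β v) →
      RecolSeqOn G L Set.univ γ (l.map fun v => (v, β v)) ∧
      applySteps γ (l.map fun v => (v, β v)) = fun v => if v ∈ l then β v else γ v := by
  intro l
  induction l with
  | nil =>
    intro γ hγ _
    exact ⟨⟨by simp, fun n hn => by simpa [applySteps] using hγ⟩, by funext w; simp [applySteps]⟩
  | cons v t ih =>
    intro γ hγ hmix
    set γ' := Function.update γ v (β v) with hγ'def
    have hγ'v : ∀ w, γ' w = if w = v then β v else γ w := by
      intro w; by_cases hw : w = v <;> simp [hγ'def, Function.update, hw]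
    have hγ'prop : ProperOn G L Set.univ γ' := by
      constructor
      · intro w _
        rw [hγ'v]
        by_cases hw : w = v
        · simpa [hw] using hβ.1 v (Set.mem_univ v)
        · simpa [hw] using hγ.1 w (Set.mem_univ w)
      · intro u _ w _ hadj
        rw [hγ'v, hγ'v]
        by_cases hu : u = v <;> by_cases hw : w = v
        · rw [hu, hw] at hadj; exact absurd hadj (G.irrefl)
        · rw [hu] at hadj
          simp only [if_pos hu, if_neg hw]
          exact fun h => hmix w v hadj.symm h.symm
        · rw [hw] at hadj
          simp only [if_neg hu, if_pos hw]
          exact hmix u v hadj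
        · simp only [if_neg hu, if_neg hw]
          exact hγ.2 u (Set.mem_univ u) w (Set.mem_univ w) hadj
    have hmix' : ∀ u w, G.Adj u w → γ' u ≠ β w := by
      intro u w hadj
      rw [hγ'v]
      by_cases hu : u = v
      · rw [hu] at hadj
        simp only [if_pos hu]
        exact hβ.2 v (Set.mem_univ v) w (Set.mem_univ w) hadj
      · simpa [hu] using hmix u w hadj
    obtain ⟨hseq, hfin⟩ := ih γ' hγ'prop hmix'
    constructor
    · rw [List.map_cons]
      exact recolSeqOn_cons.2 ⟨Set.mem_univ v, hγ, hseq⟩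
    · rw [List.map_cons]
      show applySteps γ' (t.map fun v => (v, β v)) = _
      rw [hfin]
      funext w
      by_cases hw : w ∈ t
      · simp [hw]
      · by_cases hwv : w = v
        · subst hwv; simp [hw, hγ'v]
        · simp [hw, hwv, hγ'v]

lemma pass1 (G : SimpleGraph V) [DecidableRel G.Adj] (L : V → Finset ℕ)
    (hL : ∀ v, 2 * G.maxDegree + 1 ≤ (L v).card) (β : V → ℕ) :
    ∀ (l : List V), l.Nodup → ∀ γ : V → ℕ, ProperOn G L Set.univ γ →
      (∀ v, v ∉ l → ∀ u, G.Adj u v → γ v ≠ β u) →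
      ∃ c : V → ℕ,
        RecolSeqOn G L Set.univ γ (l.map fun v => (v, c v)) ∧
        ProperOn G L Set.univ (applySteps γ (l.map fun v => (v, c v))) ∧
        (∀ v u, G.Adj u v → applySteps γ (l.map fun v => (v, c v)) v ≠ β u) := by
  intro l
  induction l with
  | nil =>
    intro _ γ hγ hinv
    exact ⟨fun _ => 0, ⟨by simp, fun n hn => by simpa [applySteps] using hγ⟩,
      by simpa [applySteps] using hγ,
      fun v u h => by simpa [applySteps] using hinv v (by simp) u h⟩
  | cons v t ih =>
    intro hnd γ hγ hinv
    have hA : ((G.neighborFinset v).image γ ∪ (G.neighborFinset v).image β).card < (L v).card := by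
      calc ((G.neighborFinset v).image γ ∪ (G.neighborFinset v).image β).card
          ≤ ((G.neighborFinset v).image γ).card + ((G.neighborFinset v).image β).card :=
            Finset.card_union_le _ _
        _ ≤ G.degree v + G.degree v :=
            Nat.add_le_add Finset.card_image_le Finset.card_image_le
        _ ≤ 2 * G.maxDegree := by have := G.degree_le_maxDegree v; omega
        _ < (L v).card := by have := hL v; omega
    have hne : (L v \ ((G.neighborFinset v).image γ ∪ (G.neighborFinset v).image β)).Nonempty := by
      rw [← Finset.card_pos]
      have := Finset.le_card_sdiff ((G.neighborFinset v).image γ ∪ (G.neighborFinset v).image β) (L v)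
      omega
    obtain ⟨cv, hcv⟩ := hne
    rw [Finset.mem_sdiff, Finset.mem_union] at hcv
    obtain ⟨hcvL, hcvA⟩ := hcv
    have hcvγ : ∀ u, G.Adj v u → cv ≠ γ u := by
      intro u hadj h
      exact hcvA (Or.inl (Finset.mem_image.2 ⟨u, (G.mem_neighborFinset v u).2 hadj, h.symm⟩))
    have hcvβ : ∀ u, G.Adj v u → cv ≠ β u := by
      intro u hadj h
      exact hcvA (Or.inr (Finset.mem_image.2 ⟨u, (G.mem_neighborFinset v u).2 hadj, h.symm⟩))
    set γ' := Function.update γ v cv with hγ'def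
    have hγ'v : ∀ w, γ' w = if w = v then cv else γ w := by
      intro w; by_cases hw : w = v <;> simp [hγ'def, Function.update, hw]
    have hγ'prop : ProperOn G L Set.univ γ' := by
      constructor
      · intro w _
        rw [hγ'v]
        by_cases hw : w = v
        · simpa [hw] using hcvL
        · simpa [hw] using hγ.1 w (Set.mem_univ w)
      · intro u _ w _ hadj
        rw [hγ'v, hγ'v]
        by_cases hu : u = v <;> by_cases hw : w = v
        · rw [hu, hw] at hadj; exact absurd hadj (G.irrefl)
        · rw [hu] at hadj
          simp only [if_pos hu, if_neg hw]
          exact hcvγ w hadj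
        · rw [hw] at hadj
          simp only [if_neg hu, if_pos hw]
          exact fun h => hcvγ u hadj.symm h.symm
        · simp only [if_neg hu, if_neg hw]
          exact hγ.2 u (Set.mem_univ u) w (Set.mem_univ w) hadj
    have hinv' : ∀ w, w ∉ t → ∀ u, G.Adj u w → γ' w ≠ β u := by
      intro w hw u hadj
      rw [hγ'v]
      by_cases hwv : w = v
      · rw [hwv] at hadj
        simp only [if_pos hwv]
        exact hcvβ u hadj.symm
      · have hwt : w ∉ v :: t := by simp [hwv, hw]
        simpa [hwv] using hinv w hwt u hadj
    obtain ⟨c', hseq, hprop, hfin⟩ := ih (List.Nodup.of_cons hnd) γ' hγ'prop hinv'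
    have hv_not_t : v ∉ t := (List.nodup_cons.1 hnd).1
    have hmapeq : (t.map fun w => (w, Function.update c' v cv w)) = t.map fun w => (w, c' w) := by
      apply List.map_congr_left
      intro w hw
      have hwv : w ≠ v := fun h => hv_not_t (h ▸ hw)
      simp [Function.update, hwv]
    refine ⟨Function.update c' v cv, ?_, ?_, ?_⟩
    · rw [List.map_cons, Function.update_self]
      exact recolSeqOn_cons.2 ⟨Set.mem_univ v, hγ, by rw [hmapeq]; exact hseq⟩
    · rw [List.map_cons, Function.update_self]
      show ProperOn G L Set.univ (applySteps γ' _)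
      rw [hmapeq]; exact hprop
    · rw [List.map_cons, Function.update_self]
      show ∀ w u, G.Adj u w → applySteps γ' _ w ≠ β u
      rw [hmapeq]; exact hfin

lemma recolors_map_le (l : List V) (hnd : l.Nodup) (c : V → ℕ) (w : V) :
    recolors (l.map fun v => (v, c v)) w ≤ 1 := by
  unfold recolors
  rw [List.countP_map]
  have h := List.nodup_iff_count_le_one.1 hnd w
  rw [List.count] at h
  refine le_trans (le_of_eq ?_) h
  apply List.countP_congr
  intro a _
  simp [beq_iff_eq]

/-- If `|L(v)| ≥ 2Δ(G) + 1` for every vertex `v`, then for any two `L`-colorings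
`α` and `β` of `G` there is an `L`-recoloring sequence transforming `α` into `β`
that recolors each vertex at most 2 times (in particular it has length at most
`2n`, where `n` is the number of vertices). -/
theorem recolor_of_two_maxDegree_plus_one (G : SimpleGraph V) [DecidableRel G.Adj]
    (L : V → Finset ℕ) (hL : ∀ v, 2 * G.maxDegree + 1 ≤ (L v).card)
    (α β : V → ℕ)
    (hα : ProperOn G L Set.univ α) (hβ : ProperOn G L Set.univ β) :
    ∃ σ : List (V × ℕ),
      RecolSeqOn G L Set.univ α σ ∧
      applySteps α σ = β ∧
      (∀ v, recolors σ v ≤ 2) ∧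
      σ.length ≤ 2 * Fintype.card V := by
  classical
  set l := (Finset.univ : Finset V).toList with hl
  have hnd : l.Nodup := Finset.nodup_toList _
  have hmem : ∀ v : V, v ∈ l := fun v => by simp [hl, Finset.mem_toList]
  obtain ⟨c, hseq1, hprop1, hinv1⟩ := pass1 G L hL β l hnd α hα
    (fun v hv => absurd (hmem v) hv)
  set γ := applySteps α (l.map fun v => (v, c v)) with hγdef
  obtain ⟨hseq2, hfin2⟩ := pass2 G L β hβ l γ hprop1 (fun u v h => hinv1 u v h.symm)
  refine ⟨(l.map fun v => (v, c v)) ++ (l.map fun v => (v, β v)), ?_, ?_, ?_, ?_⟩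
  · exact recolSeqOn_append hseq1 (hγdef ▸ hseq2)
  · rw [applySteps_append, ← hγdef, hfin2]
    funext w
    simp [hmem w]
  · intro w
    unfold recolors
    rw [List.countP_append]
    have h1 := recolors_map_le l hnd c w
    have h2 := recolors_map_le l hnd β w
    unfold recolors at h1 h2
    omega
  · simp only [List.length_append, List.length_map]
    have : l.length = Fintype.card V := by
      rw [hl, Finset.length_toList, Finset.card_univ]
    omega
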